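/- arXiv:1904.01747 — 5 statements merged into one kernel-verified Lean document; each statement's English description precedes it below -/
import Mathlib

section
/- The function f(w,D) defined on ℝ^d × (symmetric d×d matrices), given by f(w,D) = wᵀ D⁺ w if D is positive semidefinite and w is in the range of D, and f(w,D) = +∞ otherwise (where D⁺ denotes the Moore–Penrose pseudoinverse), is jointly convex in (w,D). -/
/-!
On its domain, `f(w, D) = wᵀ D⁺ w = sup_y (2 yᵀw - yᵀ D y)`: the inequality
`2 yᵀw - yᵀ D y ≤ wᵀ D⁺ w` is `(y - D⁺w)ᵀ D (y - D⁺w) ≥ 0`, and `y = D⁺w` attains it.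
Each `2 yᵀw - yᵀ D y` is affine in `(w, D)`, so evaluating at the optimal `y` for the
combination `(a w₁ + b w₂, a D₁ + b D₂)` gives convexity. That combination lies in the
domain because `ker (A + B) ⊆ ker A` for positive semidefinite `A, B`, so that
`range A ⊆ range (A + B)`.
-/

open Matrix

/-- The four Penrose conditions characterizing the Moore–Penrose pseudoinverse. -/
def IsMoorePenrose {d : ℕ} (D Dp : Matrix (Fin d) (Fin d) ℝ) : Prop :=
  D * Dp * D = D ∧ Dp * D * Dp = Dp ∧ (D * Dp)ᵀ = D * Dp ∧ (Dp * D)ᵀ = Dp * D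

open Classical in
/-- The function f(w, D) = wᵀ D⁺ w if D is PSD and w ∈ range(D), and +∞ otherwise. -/
noncomputable def fMP {d : ℕ} (pinv : Matrix (Fin d) (Fin d) ℝ → Matrix (Fin d) (Fin d) ℝ)
    (w : Fin d → ℝ) (D : Matrix (Fin d) (Fin d) ℝ) : EReal :=
  if D.PosSemidef ∧ w ∈ Set.range D.mulVec then ((w ⬝ᵥ (pinv D).mulVec w : ℝ) : EReal) else ⊤

namespace Matrix

variable {n : Type*}

theorem PosSemidef.transpose_eq {D : Matrix n n ℝ} (hD : D.PosSemidef) : Dᵀ = D := by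
  simpa using hD.isHermitian.eq

variable [Fintype n]

theorem dotProduct_mulVec_comm_of_transpose_eq {D : Matrix n n ℝ} (hD : Dᵀ = D) (u v : n → ℝ) :
    u ⬝ᵥ D *ᵥ v = v ⬝ᵥ D *ᵥ u := by
  rw [dotProduct_mulVec, ← mulVec_transpose, hD, dotProduct_comm]

theorem PosSemidef.two_mul_dotProduct_mulVec_sub_le {D : Matrix n n ℝ} (hD : D.PosSemidef)
    (u y : n → ℝ) : 2 * (y ⬝ᵥ D *ᵥ u) - y ⬝ᵥ D *ᵥ y ≤ u ⬝ᵥ D *ᵥ u := by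
  have hsq := hD.dotProduct_mulVec_nonneg (y - u)
  have hcomm := dotProduct_mulVec_comm_of_transpose_eq hD.transpose_eq u y
  simp only [star_trivial, mulVec_sub, dotProduct_sub, sub_dotProduct] at hsq
  linarith

theorem PosSemidef.mulVec_eq_zero_of_add {A B : Matrix n n ℝ} (hA : A.PosSemidef)
    (hB : B.PosSemidef) {v : n → ℝ} (hv : (A + B) *ᵥ v = 0) : A *ᵥ v = 0 := by
  have hsum : v ⬝ᵥ A *ᵥ v + v ⬝ᵥ B *ᵥ v = 0 := by
    rw [← dotProduct_add, ← add_mulVec, hv, dotProduct_zero]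
  have hAv := hA.dotProduct_mulVec_nonneg v
  have hBv := hB.dotProduct_mulVec_nonneg v
  simp only [star_trivial] at hAv hBv ⊢
  exact (hA.dotProduct_mulVec_zero_iff v).mp (by simp only [star_trivial]; linarith)

theorem range_mulVec_subset_of_ker {A D Dp : Matrix n n ℝ} (hA : Aᵀ = A) (hD : Dᵀ = D)
    (hDp : D * Dp * D = D) (hker : ∀ v, D *ᵥ v = 0 → A *ᵥ v = 0) :
    Set.range A.mulVec ⊆ Set.range D.mulVec := by
  -- `1 - Dp D` maps into `ker D ⊆ ker A`, so `A = A Dp D`; transposing gives `A = D Dpᵀ A`.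
  have hA_eq : A * (Dp * D) = A := ext_iff_mulVec.2 fun v => by
    have hv := hker (v - (Dp * D) *ᵥ v) (by
      rw [mulVec_sub, mulVec_mulVec, ← Matrix.mul_assoc, hDp, sub_self])
    rw [mulVec_sub, sub_eq_zero] at hv
    rw [← mulVec_mulVec, hv]
  rintro _ ⟨x, rfl⟩
  refine ⟨Dpᵀ *ᵥ A *ᵥ x, ?_⟩
  have := congrArg transpose hA_eq
  rw [transpose_mul, transpose_mul, hA, hD] at this
  rw [mulVec_mulVec, mulVec_mulVec, this]

theorem PosSemidef.range_mulVec_subset_add {A B Dp : Matrix n n ℝ} (hA : A.PosSemidef)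
    (hB : B.PosSemidef) (hDp : (A + B) * Dp * (A + B) = A + B) :
    Set.range A.mulVec ⊆ Set.range (A + B).mulVec :=
  range_mulVec_subset_of_ker hA.transpose_eq (hA.add hB).transpose_eq hDp
    fun _ hv => hA.mulVec_eq_zero_of_add hB hv

theorem smul_add_mem_range_smul_add_mulVec {A B Dp : Matrix n n ℝ} {u v : n → ℝ} {a b : ℝ}
    (hA : A.PosSemidef) (hB : B.PosSemidef) (ha : 0 ≤ a) (hb : 0 ≤ b)
    (hDp : (a • A + b • B) * Dp * (a • A + b • B) = a • A + b • B)
    (hu : u ∈ Set.range A.mulVec) (hv : v ∈ Set.range B.mulVec) :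
    a • u + b • v ∈ Set.range (a • A + b • B).mulVec := by
  obtain ⟨x, rfl⟩ := hu
  obtain ⟨y, rfl⟩ := hv
  have haA := hA.smul ha
  have hbB := hB.smul hb
  obtain ⟨x', hx'⟩ := haA.range_mulVec_subset_add hbB hDp ⟨x, rfl⟩
  obtain ⟨y', hy'⟩ := hbB.range_mulVec_subset_add haA (by rwa [add_comm]) ⟨y, rfl⟩
  refine ⟨x' + y', ?_⟩
  rw [add_comm] at hy'
  rw [mulVec_add, hx', hy', smul_mulVec, smul_mulVec]

end Matrix

namespace IsMoorePenrose

variable {d : ℕ} {D Dp : Matrix (Fin d) (Fin d) ℝ} {w : Fin d → ℝ}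

theorem mulVec_mulVec_of_mem_range (hMP : IsMoorePenrose D Dp) (hw : w ∈ Set.range D.mulVec) :
    D *ᵥ Dp *ᵥ w = w := by
  obtain ⟨x, rfl⟩ := hw
  rw [mulVec_mulVec, mulVec_mulVec, hMP.1]

theorem two_mul_dotProduct_sub_le (hD : D.PosSemidef) (hMP : IsMoorePenrose D Dp)
    (hw : w ∈ Set.range D.mulVec) (y : Fin d → ℝ) :
    2 * (y ⬝ᵥ w) - y ⬝ᵥ D *ᵥ y ≤ w ⬝ᵥ Dp *ᵥ w := by
  have hu := hMP.mulVec_mulVec_of_mem_range hw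
  have key := hD.two_mul_dotProduct_mulVec_sub_le (Dp *ᵥ w) y
  rwa [hu, dotProduct_comm (Dp *ᵥ w)] at key

theorem two_mul_dotProduct_sub_eq (hMP : IsMoorePenrose D Dp) (hw : w ∈ Set.range D.mulVec) :
    2 * ((Dp *ᵥ w) ⬝ᵥ w) - (Dp *ᵥ w) ⬝ᵥ D *ᵥ Dp *ᵥ w = w ⬝ᵥ Dp *ᵥ w := by
  rw [hMP.mulVec_mulVec_of_mem_range hw, dotProduct_comm]
  ring

theorem dotProduct_mulVec_smul_add_le {D₁ D₂ P P₁ P₂ : Matrix (Fin d) (Fin d) ℝ}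
    {w₁ w₂ : Fin d → ℝ} {a b : ℝ}
    (ha : 0 ≤ a) (hb : 0 ≤ b) (hD₁ : D₁.PosSemidef) (hD₂ : D₂.PosSemidef)
    (hP : IsMoorePenrose (a • D₁ + b • D₂) P) (hP₁ : IsMoorePenrose D₁ P₁)
    (hP₂ : IsMoorePenrose D₂ P₂) (hw₁ : w₁ ∈ Set.range D₁.mulVec)
    (hw₂ : w₂ ∈ Set.range D₂.mulVec) :
    (a • w₁ + b • w₂) ⬝ᵥ P *ᵥ (a • w₁ + b • w₂) ≤
      a * (w₁ ⬝ᵥ P₁ *ᵥ w₁) + b * (w₂ ⬝ᵥ P₂ *ᵥ w₂) := by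
  set w := a • w₁ + b • w₂
  set y := P *ᵥ w
  have hw := smul_add_mem_range_smul_add_mulVec hD₁ hD₂ ha hb hP.1 hw₁ hw₂
  calc w ⬝ᵥ P *ᵥ w = 2 * (y ⬝ᵥ w) - y ⬝ᵥ (a • D₁ + b • D₂) *ᵥ y :=
        (hP.two_mul_dotProduct_sub_eq hw).symm
    _ = a * (2 * (y ⬝ᵥ w₁) - y ⬝ᵥ D₁ *ᵥ y) + b * (2 * (y ⬝ᵥ w₂) - y ⬝ᵥ D₂ *ᵥ y) := by
        simp only [w, dotProduct_add, add_mulVec, smul_mulVec, dotProduct_smul, smul_eq_mul]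
        ring
    _ ≤ a * (w₁ ⬝ᵥ P₁ *ᵥ w₁) + b * (w₂ ⬝ᵥ P₂ *ᵥ w₂) := by
        gcongr
        exacts [hP₁.two_mul_dotProduct_sub_le hD₁ hw₁ y, hP₂.two_mul_dotProduct_sub_le hD₂ hw₂ y]

end IsMoorePenrose

section fMP

variable {d : ℕ} {pinv : Matrix (Fin d) (Fin d) ℝ → Matrix (Fin d) (Fin d) ℝ}
  {w : Fin d → ℝ} {D : Matrix (Fin d) (Fin d) ℝ}

theorem fMP_of_mem (h : D.PosSemidef ∧ w ∈ Set.range D.mulVec) :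
    fMP pinv w D = ((w ⬝ᵥ pinv D *ᵥ w : ℝ) : EReal) :=
  if_pos h

theorem fMP_of_not_mem (h : ¬(D.PosSemidef ∧ w ∈ Set.range D.mulVec)) : fMP pinv w D = ⊤ :=
  if_neg h

theorem coe_mul_fMP_ne_bot {c : ℝ} (hc : 0 ≤ c) : (c : EReal) * fMP pinv w D ≠ ⊥ := by
  have hf : fMP pinv w D ≠ ⊥ := by
    unfold fMP
    split_ifs <;> simp
  rw [EReal.mul_ne_bot]
  exact ⟨.inl (EReal.coe_ne_bot c), .inr hf, .inl (EReal.coe_ne_top c),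
    .inl (EReal.coe_nonneg.mpr hc)⟩

end fMP

theorem fMP_jointly_convex_general {d : ℕ}
    (pinv : Matrix (Fin d) (Fin d) ℝ → Matrix (Fin d) (Fin d) ℝ)
    (hpinv : ∀ D, IsMoorePenrose D (pinv D))
    (w₁ w₂ : Fin d → ℝ) (D₁ D₂ : Matrix (Fin d) (Fin d) ℝ)
    (a b : ℝ) (ha : 0 ≤ a) (hb : 0 ≤ b) (hab : a + b = 1) :
    fMP pinv (a • w₁ + b • w₂) (a • D₁ + b • D₂) ≤
      (a : EReal) * fMP pinv w₁ D₁ + (b : EReal) * fMP pinv w₂ D₂ := by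
  -- `0 * ⊤ = 0` in `EReal`, so a vanishing weight may sit on a point outside the domain.
  rcases ha.eq_or_lt with rfl | ha'
  · obtain rfl : b = 1 := by linarith
    simp
  rcases hb.eq_or_lt with rfl | hb'
  · obtain rfl : a = 1 := by linarith
    simp
  by_cases h₁ : D₁.PosSemidef ∧ w₁ ∈ Set.range D₁.mulVec
  swap
  · rw [fMP_of_not_mem h₁, EReal.coe_mul_top_of_pos ha',
      EReal.top_add_of_ne_bot (coe_mul_fMP_ne_bot hb)]
    exact le_top
  by_cases h₂ : D₂.PosSemidef ∧ w₂ ∈ Set.range D₂.mulVec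
  swap
  · rw [fMP_of_not_mem h₂, EReal.coe_mul_top_of_pos hb',
      EReal.add_top_of_ne_bot (coe_mul_fMP_ne_bot ha)]
    exact le_top
  have hmem : a • w₁ + b • w₂ ∈ Set.range (a • D₁ + b • D₂).mulVec :=
    smul_add_mem_range_smul_add_mulVec h₁.1 h₂.1 ha hb (hpinv _).1 h₁.2 h₂.2
  rw [fMP_of_mem ⟨(h₁.1.smul ha).add (h₂.1.smul hb), hmem⟩, fMP_of_mem h₁, fMP_of_mem h₂]
  exact_mod_cast (hpinv _).dotProduct_mulVec_smul_add_le ha hb h₁.1 h₂.1 (hpinv D₁) (hpinv D₂)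
    h₁.2 h₂.2

/-- the function f(w, D) is jointly convex on ℝ^d × (symmetric matrices). -/
theorem fMP_jointly_convex {d : ℕ}
    (pinv : Matrix (Fin d) (Fin d) ℝ → Matrix (Fin d) (Fin d) ℝ)
    (hpinv : ∀ D, IsMoorePenrose D (pinv D))
    (w₁ w₂ : Fin d → ℝ) (D₁ D₂ : Matrix (Fin d) (Fin d) ℝ)
    (hD₁ : D₁ᵀ = D₁) (hD₂ : D₂ᵀ = D₂)
    (a b : ℝ) (ha : 0 ≤ a) (hb : 0 ≤ b) (hab : a + b = 1) :
    fMP pinv (a • w₁ + b • w₂) (a • D₁ + b • D₂) ≤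
      (a : EReal) * fMP pinv w₁ D₁ + (b : EReal) * fMP pinv w₂ D₂ :=
  fMP_jointly_convex_general pinv hpinv w₁ w₂ D₁ D₂ a b ha hb hab
end

section
/- For any matrix W ∈ ℝ^{d×T} with W ≠ 0, the matrix D̂ = (WWᵀ)^{1/2} / trace((WWᵀ)^{1/2}) minimizes ∑_{t=1}^T ⟨w_t, D⁺ w_t⟩ over all positive semidefinite symmetric matrices D with trace(D) ≤ 1 and range(W) ⊆ range(D), and the minimum value equals (trace((WWᵀ)^{1/2}))² = ‖W‖_{tr}², the square of the trace (nuclear) norm of W. -/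
/-!
Write `S = (WWᵀ)^{1/2}` and `R = D^{1/2}`. The range condition makes the projection `D D⁺` fix
`S`, so `S = Rᵀ (R D⁺ S)`, and Cauchy–Schwarz for the Frobenius inner product gives
`(tr S)² ≤ ‖R‖² ‖R D⁺ S‖² = tr D · tr (D⁺ S²) = tr D · ∑ₜ ⟨wₜ, D⁺ wₜ⟩`.
For `D̂ = S / tr S` one has `D̂⁺ = (tr S) S⁺`, so the objective at `D̂` is
`(tr S) tr (S⁺ S S) = (tr S)²`.
-/

open Matrix

/-- The objective ∑ₜ ⟨wₜ, D⁺ wₜ⟩, where wₜ are the columns of W and D⁺ = pinv D. -/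
noncomputable def mtObj {d T : ℕ} (pinv : Matrix (Fin d) (Fin d) ℝ → Matrix (Fin d) (Fin d) ℝ)
    (W : Matrix (Fin d) (Fin T) ℝ) (D : Matrix (Fin d) (Fin d) ℝ) : ℝ :=
  ∑ t, (Wᵀ t) ⬝ᵥ (pinv D).mulVec (Wᵀ t)

/-- The square root of a positive semidefinite matrix, as defined in the older Mathlib
(`Matrix.PosSemidef.sqrt`, since removed). -/
noncomputable def Matrix.PosSemidef.sqrt {n : Type*} [Fintype n] [DecidableEq n] {𝕜 : Type*}
    [RCLike 𝕜] [PartialOrder 𝕜] {A : Matrix n n 𝕜} (hA : A.PosSemidef) : Matrix n n 𝕜 :=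
  hA.1.eigenvectorUnitary.1 * diagonal ((↑) ∘ (√·) ∘ hA.1.eigenvalues) *
    (star hA.1.eigenvectorUnitary : Matrix n n 𝕜)

namespace Matrix

variable {m n : Type*} [Fintype m] [Fintype n]

theorem sq_trace_transpose_mul_le (A B : Matrix m n ℝ) :
    (Aᵀ * B).trace ^ 2 ≤ (Aᵀ * A).trace * (Bᵀ * B).trace := by
  have hsum : ∀ A B : Matrix m n ℝ, (Aᵀ * B).trace = ∑ p : n × m, A p.2 p.1 * B p.2 p.1 := by
    intro A B
    simp only [trace, diag, mul_apply, transpose_apply, Fintype.sum_prod_type]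
  simpa only [hsum, pow_two] using
    Finset.sum_mul_sq_le_sq_mul_sq Finset.univ (fun p : n × m => A p.2 p.1) (fun p => B p.2 p.1)

theorem mul_eq_self_of_mul_mul_transpose_eq {Q : Matrix m m ℝ} (hQ : Qᵀ = Q) {A : Matrix m n ℝ}
    (hQA : Q * (A * Aᵀ) = A * Aᵀ) : Q * A = A := by
  have key : (A - Q * A) * (A - Q * A)ᵀ = 0 := by
    have hQA' : Q * A * Aᵀ = A * Aᵀ := by rw [Matrix.mul_assoc, hQA]
    simp only [transpose_sub, transpose_mul, hQ, Matrix.sub_mul, Matrix.mul_sub,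
      ← Matrix.mul_assoc, hQA', sub_self, Matrix.zero_mul]
  rw [← conjTranspose_eq_transpose_of_trivial, self_mul_conjTranspose_eq_zero] at key
  exact (sub_eq_zero.mp key).symm

variable [DecidableEq n]

namespace PosSemidef

theorem sqrt_mul_self {A : Matrix n n ℝ} (hA : A.PosSemidef) : hA.sqrt * hA.sqrt = A := by
  have hU : (star hA.1.eigenvectorUnitary : Matrix n n ℝ) * hA.1.eigenvectorUnitary.1 = 1 :=
    Unitary.coe_star_mul_self _
  conv_rhs => rw [hA.1.spectral_theorem]
  simp only [sqrt, Unitary.conjStarAlgAut_apply]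
  rw [show ∀ a b c e f g : Matrix n n ℝ, a * b * c * (e * f * g) = a * b * (c * e) * f * g by
      intros; simp only [Matrix.mul_assoc], hU, Matrix.mul_one,
    Matrix.mul_assoc _ (diagonal _) (diagonal _), diagonal_mul_diagonal]
  congr 3
  funext i
  simp [Real.mul_self_sqrt (hA.eigenvalues_nonneg i)]

theorem posSemidef_sqrt {A : Matrix n n ℝ} (hA : A.PosSemidef) : hA.sqrt.PosSemidef :=
  (posSemidef_diagonal_iff.mpr fun i => by simp [Real.sqrt_nonneg]).mul_mul_conjTranspose_same
    hA.1.eigenvectorUnitary.1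

theorem transpose_sqrt {A : Matrix n n ℝ} (hA : A.PosSemidef) : hA.sqrtᵀ = hA.sqrt := by
  rw [← conjTranspose_eq_transpose_of_trivial]
  exact hA.posSemidef_sqrt.isHermitian.eq

end PosSemidef

end Matrix

namespace IsMoorePenrose

variable {d : ℕ} {D X Y : Matrix (Fin d) (Fin d) ℝ}

theorem unique (hX : IsMoorePenrose D X) (hY : IsMoorePenrose D Y) : X = Y := by
  obtain ⟨hX1, hX2, hX3, hX4⟩ := hX
  obtain ⟨hY1, hY2, hY3, hY4⟩ := hY
  have hDX : D * X = D * Y :=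
    calc D * X = (D * Y) * (D * X) := by rw [← Matrix.mul_assoc, hY1]
      _ = ((D * X) * (D * Y))ᵀ := by rw [transpose_mul, hX3, hY3]
      _ = D * Y := by rw [← Matrix.mul_assoc, hX1, hY3]
  have hXD : X * D = Y * D :=
    calc X * D = (X * D) * (Y * D) := by rw [Matrix.mul_assoc, ← Matrix.mul_assoc D, hY1]
      _ = ((Y * D) * (X * D))ᵀ := by rw [transpose_mul, hX4, hY4]
      _ = Y * D := by rw [Matrix.mul_assoc, ← Matrix.mul_assoc D, hX1, hY4]
  calc X = X * D * X := hX2.symm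
    _ = Y * D * Y := by rw [hXD, Matrix.mul_assoc, hDX, ← Matrix.mul_assoc]
    _ = Y := hY2

theorem transpose_eq (hD : Dᵀ = D) (h : IsMoorePenrose D X) : Xᵀ = X := by
  obtain ⟨h1, h2, h3, h4⟩ := h
  refine unique ⟨?_, ?_, ?_, ?_⟩ ⟨h1, h2, h3, h4⟩
  · simpa only [transpose_mul, hD, Matrix.mul_assoc] using congrArg transpose h1
  · simpa only [transpose_mul, hD, Matrix.mul_assoc] using congrArg transpose h2
  · rw [show D * Xᵀ = (X * D)ᵀ by rw [transpose_mul, hD], transpose_transpose, h4]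
  · rw [show Xᵀ * D = (D * X)ᵀ by rw [transpose_mul, hD], transpose_transpose, h3]

theorem smul {c : ℝ} (hc : c ≠ 0) (h : IsMoorePenrose D X) :
    IsMoorePenrose (c • D) (c⁻¹ • X) := by
  obtain ⟨h1, h2, h3, h4⟩ := h
  refine ⟨?_, ?_, ?_, ?_⟩ <;>
    simp [smul_smul, h1, h2, h3, h4, mul_inv_cancel₀ hc, inv_mul_cancel₀ hc]

theorem mul_mul_eq_of_range_subset {n : Type*} [Fintype n] [DecidableEq n]
    (h : IsMoorePenrose D X) {A : Matrix (Fin d) n ℝ}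
    (hA : ∀ v ∈ Set.range A.mulVec, v ∈ Set.range D.mulVec) : D * X * A = A := by
  refine ext_iff_mulVec.mpr fun v => ?_
  obtain ⟨u, hu⟩ := hA _ ⟨v, rfl⟩
  rw [← mulVec_mulVec, ← hu, mulVec_mulVec, h.1]

theorem sq_trace_le_trace_mul_trace (hD : D.PosSemidef) (h : IsMoorePenrose D X) {S : Matrix (Fin d) (Fin d) ℝ}
    (hS : Sᵀ = S) (hDXS : D * X * S = S) : S.trace ^ 2 ≤ D.trace * (X * (S * S)).trace := by
  have hX : Xᵀ = X := h.transpose_eq (by rw [← conjTranspose_eq_transpose_of_trivial, hD.1.eq])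
  set R := hD.sqrt
  have hRR : R * R = D := hD.sqrt_mul_self
  have hRt : Rᵀ = R := hD.transpose_sqrt
  have hRtB : Rᵀ * (R * X * S) = S := by
    rw [hRt, ← Matrix.mul_assoc, ← Matrix.mul_assoc, hRR, hDXS]
  have hBtB : (R * X * S)ᵀ * (R * X * S) = S * X * S := by
    simp only [transpose_mul, hS, hX, hRt, Matrix.mul_assoc]
    rw [← Matrix.mul_assoc R R, hRR, ← Matrix.mul_assoc X D, ← Matrix.mul_assoc (X * D), h.2.1]
  have := sq_trace_transpose_mul_le R (R * X * S)
  rwa [hRtB, hBtB, hRt, hRR, trace_mul_cycle, trace_mul_comm] at this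

end IsMoorePenrose

theorem mtObj_eq_trace {d T : ℕ} (pinv : Matrix (Fin d) (Fin d) ℝ → Matrix (Fin d) (Fin d) ℝ)
    (W : Matrix (Fin d) (Fin T) ℝ) (D : Matrix (Fin d) (Fin d) ℝ) :
    mtObj pinv W D = (pinv D * (W * Wᵀ)).trace := by
  rw [← Matrix.mul_assoc, trace_mul_comm]
  simp only [mtObj, trace, diag, mul_apply, transpose_apply, mulVec, dotProduct, Finset.mul_sum]

section Objective

variable {d T : ℕ} {pinv : Matrix (Fin d) (Fin d) ℝ → Matrix (Fin d) (Fin d) ℝ}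
  {W : Matrix (Fin d) (Fin T) ℝ}

theorem trace_sqrt_pos (hP : (W * Wᵀ).PosSemidef) (hW : W ≠ 0) : 0 < hP.sqrt.trace := by
  refine hP.posSemidef_sqrt.trace_nonneg.lt_of_ne (Ne.symm fun h => hW ?_)
  rw [← self_mul_conjTranspose_eq_zero, conjTranspose_eq_transpose_of_trivial,
    ← hP.sqrt_mul_self, hP.posSemidef_sqrt.trace_eq_zero_iff.mp h, Matrix.zero_mul]

theorem mul_mul_eq_self_of_mul_self_eq {S X : Matrix (Fin d) (Fin d) ℝ}
    (h : IsMoorePenrose S X) (hSS : S * S = W * Wᵀ) : S * X * W = W :=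
  mul_eq_self_of_mul_mul_transpose_eq h.2.2.1 (by rw [← hSS, ← Matrix.mul_assoc, h.1])

theorem mtObj_inv_smul (hpinv : ∀ D, IsMoorePenrose D (pinv D)) {S : Matrix (Fin d) (Fin d) ℝ}
    (hSS : S * S = W * Wᵀ) {c : ℝ} (hc : c ≠ 0) : mtObj pinv W (c⁻¹ • S) = c * S.trace := by
  have hpinv_smul : pinv (c⁻¹ • S) = c • pinv S :=
    (hpinv _).unique (by simpa only [inv_inv] using (hpinv S).smul (inv_ne_zero hc))
  rw [mtObj_eq_trace, hpinv_smul, smul_mul, trace_smul, ← hSS, ← Matrix.mul_assoc,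
    trace_mul_cycle, (hpinv S).1, smul_eq_mul]

theorem sq_trace_le_trace_mul_mtObj {S : Matrix (Fin d) (Fin d) ℝ} (hS : Sᵀ = S)
    (hSS : S * S = W * Wᵀ) {D : Matrix (Fin d) (Fin d) ℝ} (hD : D.PosSemidef)
    (h : IsMoorePenrose D (pinv D)) (hWD : ∀ v ∈ Set.range W.mulVec, v ∈ Set.range D.mulVec) :
    S.trace ^ 2 ≤ D.trace * mtObj pinv W D := by
  have hDS : D * pinv D * S = S := mul_eq_self_of_mul_mul_transpose_eq h.2.2.1
    (by rw [hS, hSS, ← Matrix.mul_assoc, h.mul_mul_eq_of_range_subset hWD])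
  rw [mtObj_eq_trace, ← hSS]
  exact h.sq_trace_le_trace_mul_trace hD hS hDS

end Objective

/-- D̂ = (WWᵀ)^{1/2}/trace((WWᵀ)^{1/2}) minimizes ∑ₜ ⟨wₜ, D⁺ wₜ⟩ over PSD
matrices with trace(D) ≤ 1 and range(W) ⊆ range(D); the minimum equals
(trace((WWᵀ)^{1/2}))², the squared trace norm of W. -/
theorem trace_norm_variational {d T : ℕ}
    (pinv : Matrix (Fin d) (Fin d) ℝ → Matrix (Fin d) (Fin d) ℝ)
    (hpinv : ∀ D, IsMoorePenrose D (pinv D))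
    (W : Matrix (Fin d) (Fin T) ℝ) (hW : W ≠ 0)
    (hP : (W * Wᵀ).PosSemidef)
    (Dhat : Matrix (Fin d) (Fin d) ℝ)
    (hDhat : Dhat = (hP.sqrt.trace)⁻¹ • hP.sqrt) :
    (Dhat.PosSemidef ∧ Dhat.trace ≤ 1 ∧
        ∀ v ∈ Set.range W.mulVec, v ∈ Set.range Dhat.mulVec) ∧
      (∀ D : Matrix (Fin d) (Fin d) ℝ, D.PosSemidef → D.trace ≤ 1 →
        (∀ v ∈ Set.range W.mulVec, v ∈ Set.range D.mulVec) →
        mtObj pinv W Dhat ≤ mtObj pinv W D) ∧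
      mtObj pinv W Dhat = hP.sqrt.trace ^ 2 := by
  have hc : 0 < hP.sqrt.trace := trace_sqrt_pos hP hW
  set S := hP.sqrt
  have hSS : S * S = W * Wᵀ := hP.sqrt_mul_self
  have hval : mtObj pinv W Dhat = S.trace ^ 2 := by
    rw [hDhat, mtObj_inv_smul hpinv hSS hc.ne', sq]
  refine ⟨⟨?_, ?_, ?_⟩, fun D hD hDtr hWD => ?_, hval⟩
  · rw [hDhat]
    exact hP.posSemidef_sqrt.smul (inv_nonneg.mpr hc.le)
  · rw [hDhat, trace_smul, smul_eq_mul, inv_mul_cancel₀ hc.ne']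
  · rintro _ ⟨x, rfl⟩
    refine ⟨S.trace • (pinv S * W) *ᵥ x, ?_⟩
    rw [hDhat, smul_mulVec, mulVec_smul, mulVec_mulVec, smul_smul, inv_mul_cancel₀ hc.ne',
      one_smul, ← Matrix.mul_assoc, mul_mul_eq_self_of_mul_self_eq (hpinv S) hSS]
  · have hcs := sq_trace_le_trace_mul_mtObj hP.transpose_sqrt hSS hD (hpinv D) hWD
    have hobj_pos : 0 < D.trace * mtObj pinv W D := (pow_pos hc 2).trans_le hcs
    rw [hval]
    exact hcs.trans
      (mul_le_of_le_one_left (pos_of_mul_pos_right hobj_pos hD.trace_nonneg).le hDtr)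
end

section
/- For any d×T real matrix A with rows a^1,...,a^d, and any orthogonal d×d matrix U, letting W = UA, the matrix D = U · Diag(‖a^i‖₂ / ‖A‖_{2,1})_{i=1}^d · Uᵀ (where ‖A‖_{2,1} = ∑_{i=1}^d ‖a^i‖₂ > 0) is positive semidefinite with trace(D) = 1, range(W) ⊆ range(D), and ∑_{t=1}^T ⟨w_t, D⁺ w_t⟩ = ‖A‖_{2,1}². -/
open Matrix

/-- The L2,1-norm of a matrix: the sum of the Euclidean norms of its rows. -/
noncomputable def l21 {d T : ℕ} (A : Matrix (Fin d) (Fin T) ℝ) : ℝ :=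
  ∑ i, Real.sqrt (∑ t, A i t ^ 2)

/-!
Conjugating by the orthogonal matrix `U` reduces everything to the diagonal matrix
`Diag(cᵢ)`, `cᵢ = ‖aⁱ‖₂ / ‖A‖₂,₁`, whose Moore–Penrose inverse is `Diag(cᵢ⁻¹)`; by uniqueness of
the pseudoinverse, `D⁺ = U Diag(cᵢ⁻¹) Uᵀ`. A row with `cᵢ = 0` vanishes, so `A = Diag(c) Diag(c⁻¹) A`
and `W = D (U Diag(c⁻¹) A)`. Finally `∑ₜ ⟨wₜ, D⁺ wₜ⟩ = ∑ᵢ cᵢ⁻¹ ‖aⁱ‖₂² = ‖A‖₂,₁ ∑ᵢ ‖aⁱ‖₂`.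
-/

namespace IsMoorePenrose

variable {d : ℕ} {D P Q : Matrix (Fin d) (Fin d) ℝ}

theorem unique_s2 (hP : IsMoorePenrose D P) (hQ : IsMoorePenrose D Q) : P = Q := by
  obtain ⟨hP1, hP2, hP3, hP4⟩ := hP
  obtain ⟨hQ1, hQ2, hQ3, hQ4⟩ := hQ
  have hP_eq : P = P * Pᵀ * Dᵀ := by
    conv_lhs => rw [← hP2, Matrix.mul_assoc, ← hP3, transpose_mul, ← Matrix.mul_assoc]
  have hQ_eq : Q = Dᵀ * Qᵀ * Q := by
    conv_lhs => rw [← hQ2, ← hQ4, transpose_mul]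
  have hDt_right : Dᵀ = Dᵀ * (D * Q) := by
    conv_lhs => rw [← hQ1, transpose_mul, hQ3]
  have hDt_left : Dᵀ = P * D * Dᵀ := by
    conv_lhs => rw [← hP1, Matrix.mul_assoc, transpose_mul, hP4]
  calc P = P * Pᵀ * (Dᵀ * (D * Q)) := by rw [← hDt_right, ← hP_eq]
    _ = P * D * Q := by rw [← Matrix.mul_assoc, ← hP_eq, Matrix.mul_assoc]
    _ = P * D * Dᵀ * Qᵀ * Q := by simp only [Matrix.mul_assoc, ← hQ_eq]
    _ = Q := by rw [← hDt_left, ← hQ_eq]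

theorem diagonal_inv (c : Fin d → ℝ) : IsMoorePenrose (diagonal c) (diagonal c⁻¹) := by
  have inv_mul_inv_cancel (a : ℝ) : a⁻¹ * a * a⁻¹ = a⁻¹ := by
    simpa only [inv_inv] using mul_inv_mul_cancel a⁻¹
  simp only [IsMoorePenrose, diagonal_mul_diagonal, diagonal_transpose, Pi.inv_apply,
    mul_inv_mul_cancel, inv_mul_inv_cancel, true_and, and_true]
  rfl

theorem conj (h : IsMoorePenrose D P) {U : Matrix (Fin d) (Fin d) ℝ} (hU : Uᵀ * U = 1) :
    IsMoorePenrose (U * D * Uᵀ) (U * P * Uᵀ) := by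
  obtain ⟨h1, h2, h3, h4⟩ := h
  have conj_mul : ∀ M N : Matrix (Fin d) (Fin d) ℝ,
      U * M * Uᵀ * (U * N * Uᵀ) = U * (M * N) * Uᵀ := by
    intro M N
    simp only [Matrix.mul_assoc, ← Matrix.mul_assoc Uᵀ U, hU, Matrix.one_mul]
  refine ⟨?_, ?_, ?_, ?_⟩
  · rw [conj_mul, conj_mul, h1]
  · rw [conj_mul, conj_mul, h2]
  · rw [conj_mul, transpose_mul, transpose_mul, transpose_transpose, h3]
    simp only [Matrix.mul_assoc]
  · rw [conj_mul, transpose_mul, transpose_mul, transpose_transpose, h4]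
    simp only [Matrix.mul_assoc]

end IsMoorePenrose

theorem eq_zero_of_sqrt_sum_sq_eq_zero {ι : Type*} [Fintype ι] {a : ι → ℝ}
    (h : Real.sqrt (∑ t, a t ^ 2) = 0) : a = 0 := by
  rw [Real.sqrt_eq_zero (Finset.sum_nonneg fun t _ => sq_nonneg (a t)),
    Finset.sum_eq_zero_iff_of_nonneg fun t _ => sq_nonneg (a t)] at h
  funext t
  exact pow_eq_zero_iff two_ne_zero |>.mp (h t (Finset.mem_univ t))

theorem inv_sqrt_div_mul_self {x : ℝ} (hx : 0 ≤ x) (s : ℝ) :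
    (Real.sqrt x / s)⁻¹ * x = s * Real.sqrt x := by
  rcases (Real.sqrt_nonneg x).eq_or_lt with h | h
  · rw [← h, (Real.sqrt_eq_zero hx).mp h.symm]
    simp
  · rw [inv_div, div_mul_eq_mul_div, div_eq_iff h.ne', mul_assoc, Real.mul_self_sqrt hx]

theorem diagonal_mul_diagonal_inv_mul {d T : ℕ} {c : Fin d → ℝ} {A : Matrix (Fin d) (Fin T) ℝ}
    (hc : ∀ i, c i = 0 → A i = 0) : diagonal c * (diagonal c⁻¹ * A) = A := by
  ext i t
  by_cases h : c i = 0
  · simp [hc i h]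
  · simp [h]

theorem range_mulVec_mul_subset {m n p : Type*} [Fintype n] [Fintype p]
    (D : Matrix m n ℝ) (X : Matrix n p ℝ) : Set.range (D * X).mulVec ⊆ Set.range D.mulVec :=
  fun _ ⟨x, hx⟩ => ⟨X *ᵥ x, by rw [mulVec_mulVec, hx]⟩

theorem dotProduct_conj_mulVec {d : ℕ} {U : Matrix (Fin d) (Fin d) ℝ} (hU : Uᵀ * U = 1)
    (M : Matrix (Fin d) (Fin d) ℝ) (x : Fin d → ℝ) :
    (U *ᵥ x) ⬝ᵥ (U * M * Uᵀ) *ᵥ (U *ᵥ x) = x ⬝ᵥ M *ᵥ x := by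
  have hUMU : U * M * Uᵀ * U = U * M := by rw [Matrix.mul_assoc, hU, Matrix.mul_one]
  rw [mulVec_mulVec, hUMU, ← mulVec_mulVec, dotProduct_mulVec, ← mulVec_transpose, mulVec_mulVec,
    hU, one_mulVec]

theorem dotProduct_diagonal_mulVec {d : ℕ} (c x : Fin d → ℝ) :
    x ⬝ᵥ diagonal c *ᵥ x = ∑ i, c i * x i ^ 2 := by
  simp only [dotProduct, mulVec_diagonal]
  exact Finset.sum_congr rfl fun i _ => by ring

theorem range_mulVec_subset_range_conj_diagonal_mulVec {d T : ℕ} {U : Matrix (Fin d) (Fin d) ℝ}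
    (hU : Uᵀ * U = 1) {c : Fin d → ℝ} {A : Matrix (Fin d) (Fin T) ℝ}
    (hc : ∀ i, c i = 0 → A i = 0) :
    Set.range (U * A).mulVec ⊆ Set.range (U * diagonal c * Uᵀ).mulVec := by
  have hUA : U * A = U * diagonal c * Uᵀ * (U * (diagonal c⁻¹ * A)) := by
    rw [Matrix.mul_assoc _ Uᵀ, ← Matrix.mul_assoc Uᵀ, hU, Matrix.one_mul, Matrix.mul_assoc,
      diagonal_mul_diagonal_inv_mul hc]
  rw [hUA]
  exact range_mulVec_mul_subset _ _

theorem sum_dotProduct_conj_diagonal_mulVec {d T : ℕ} {U : Matrix (Fin d) (Fin d) ℝ}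
    (hU : Uᵀ * U = 1) (g : Fin d → ℝ) (A : Matrix (Fin d) (Fin T) ℝ) :
    ∑ t, (U * A)ᵀ t ⬝ᵥ (U * diagonal g * Uᵀ) *ᵥ (U * A)ᵀ t = ∑ i, g i * ∑ t, A i t ^ 2 := by
  calc ∑ t, (U * A)ᵀ t ⬝ᵥ (U * diagonal g * Uᵀ) *ᵥ (U * A)ᵀ t
      = ∑ t, ∑ i, g i * A i t ^ 2 :=
        Finset.sum_congr rfl fun t _ => by
          rw [show (U * A)ᵀ t = U *ᵥ Aᵀ t from rfl, dotProduct_conj_mulVec hU,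
            dotProduct_diagonal_mulVec]
          rfl
    _ = ∑ i, g i * ∑ t, A i t ^ 2 := by simp only [Finset.sum_comm (γ := Fin T), Finset.mul_sum]

/-- for W = UA (U orthogonal) and D = U·Diag(‖aⁱ‖₂/‖A‖₂₁)·Uᵀ, the matrix D is
PSD with trace 1, range(W) ⊆ range(D), and ∑ₜ ⟨wₜ, D⁺ wₜ⟩ = ‖A‖₂₁². -/
theorem diag_construction {d T : ℕ} (A : Matrix (Fin d) (Fin T) ℝ) (hA : 0 < l21 A)
    (U : Matrix (Fin d) (Fin d) ℝ) (hU : Uᵀ * U = 1)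
    (W : Matrix (Fin d) (Fin T) ℝ) (hW : W = U * A)
    (D : Matrix (Fin d) (Fin d) ℝ)
    (hD : D = U * Matrix.diagonal (fun i => Real.sqrt (∑ t, A i t ^ 2) / l21 A) * Uᵀ)
    (Dp : Matrix (Fin d) (Fin d) ℝ) (hDp : IsMoorePenrose D Dp) :
    D.PosSemidef ∧ D.trace = 1 ∧
      (∀ v ∈ Set.range W.mulVec, v ∈ Set.range D.mulVec) ∧
      ∑ t, (Wᵀ t) ⬝ᵥ Dp.mulVec (Wᵀ t) = l21 A ^ 2 := by
  set c : Fin d → ℝ := fun i => Real.sqrt (∑ t, A i t ^ 2) / l21 A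
  have hDp_eq : Dp = U * diagonal c⁻¹ * Uᵀ :=
    hDp.unique_s2 (hD ▸ (IsMoorePenrose.diagonal_inv c).conj hU)
  subst hW hD hDp_eq
  have hc_zero (i) (h : c i = 0) : A i = 0 :=
    eq_zero_of_sqrt_sum_sq_eq_zero <| (div_eq_zero_iff.mp h).resolve_right hA.ne'
  refine ⟨?psd, ?trace, range_mulVec_subset_range_conj_diagonal_mulVec hU hc_zero, ?sum⟩
  case psd =>
    exact (posSemidef_diagonal_iff.mpr fun i => by positivity).mul_mul_conjTranspose_same U
  case trace =>
    rw [trace_mul_cycle, hU, Matrix.one_mul, trace_diagonal, ← Finset.sum_div]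
    exact div_self hA.ne'
  case sum =>
    calc _ = ∑ i, l21 A * Real.sqrt (∑ t, A i t ^ 2) := by
          rw [sum_dotProduct_conj_diagonal_mulVec hU]
          exact Finset.sum_congr rfl fun i _ =>
            inv_sqrt_div_mul_self (Finset.sum_nonneg fun t _ => sq_nonneg _) _
      _ = l21 A ^ 2 := by rw [← Finset.mul_sum, sq]; rfl
end

section
/- Suppose the L2,1-norm constraint ‖A‖_{2,1}² ≤ T/γ holds for A = [a_1,...,a_T] ∈ ℝ^{d×T} and ‖a_0‖₂² ≤ 1/β, and U ∈ ℝ^{d×d} is orthogonal. Then for any fixed vectors x_{ti} ∈ ℝ^d and i.i.d. Rademacher variables σ_{ti}, E_σ sup_{A,a_0,U} ∑_{t=1}^T ∑_{i=1}^{m_t} σ_{ti} ⟨U(a_t + a_0), x_{ti}⟩ ≤ (√(T/γ) + √(1/β)) · √(∑_{t=1}^T ∑_{i=1}^{m_t} ‖x_{ti}‖₂²), where the supremum is over all A, a_0, U satisfying the constraints. -/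
/-
For fixed signs put `y t = ∑ i, σ t i • x t i`. Moving `U` to the other side of the inner
product, the objective is `∑ t, ⟪a t, Uᵀ y t⟫ + ⟪a₀, Uᵀ ∑ t, y t⟫`. Cauchy–Schwarz row by row
bounds the first term by `‖A‖₂₁ · (∑ t, ‖y t‖²)^½` and the second by `‖a₀‖ · ‖∑ t, y t‖`,
since `Uᵀ` is an isometry. Averaging over the signs, Cauchy–Schwarz (Jensen for `√`) reduces
both square roots to second moments, and `E σₖ σₗ = δₖₗ` makes each second moment equal to
`∑ t, ∑ i, ‖x t i‖²`.
-/

open Matrix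

open Finset

section Rademacher

variable {ι : Type*} [Fintype ι] [DecidableEq ι]

theorem sum_sign_mul_sign_of_ne {k l : ι} (hkl : k ≠ l) :
    ∑ σ : ι → Bool, (if σ k then (1 : ℝ) else -1) * (if σ l then 1 else -1) = 0 := by
  refine sum_ninvolution (fun σ => Function.update σ k (!σ k)) (fun σ => ?_) (fun σ _ => ?_)
    (fun _ => mem_univ _) (fun σ => ?_)
  · simp only [Function.update_self, Function.update_of_ne hkl.symm]
    cases σ k <;> cases σ l <;> norm_num
  · exact fun h => by simpa using congrFun h k
  · simp [Function.update_idem]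

theorem sum_sq_sum_sign_mul (c : ι → ℝ) :
    ∑ σ : ι → Bool, (∑ k, (if σ k then (1 : ℝ) else -1) * c k) ^ 2
      = Fintype.card (ι → Bool) * ∑ k, c k ^ 2 := by
  have diag (k : ι) : ∑ σ : ι → Bool, (if σ k then (1 : ℝ) else -1) * (if σ k then 1 else -1)
      = Fintype.card (ι → Bool) := by
    have (σ : ι → Bool) : (if σ k then (1 : ℝ) else -1) * (if σ k then 1 else -1) = 1 := by
      cases σ k <;> simp
    simp only [this, sum_const, card_univ, nsmul_one]
  calc ∑ σ : ι → Bool, (∑ k, (if σ k then (1 : ℝ) else -1) * c k) ^ 2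
      = ∑ k, ∑ l, (∑ σ : ι → Bool,
          (if σ k then (1 : ℝ) else -1) * (if σ l then 1 else -1)) * (c k * c l) := by
        simp_rw [sq, sum_mul_sum, sum_mul]
        rw [sum_comm]
        refine sum_congr rfl fun k _ => ?_
        rw [sum_comm]
        exact sum_congr rfl fun l _ => sum_congr rfl fun σ _ => by ring
    _ = ∑ k, Fintype.card (ι → Bool) * c k ^ 2 := by
        refine sum_congr rfl fun k _ => ?_
        rw [sum_eq_single k (fun l _ hlk => by rw [sum_sign_mul_sign_of_ne hlk.symm, zero_mul])
          (by simp), diag, sq]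
    _ = Fintype.card (ι → Bool) * ∑ k, c k ^ 2 := (mul_sum ..).symm

end Rademacher

section SignPatterns

variable {α : Type*} [Fintype α] [DecidableEq α] {κ : α → Type*}
  [∀ a, Fintype (κ a)] [∀ a, DecidableEq (κ a)] {n : Type*} [Fintype n]

theorem sum_sq_sum_sum_sign_mul (c : (a : α) → κ a → ℝ) :
    ∑ s : (a : α) → κ a → Bool, (∑ a, ∑ i, (if s a i then (1 : ℝ) else -1) * c a i) ^ 2
      = Fintype.card ((a : α) → κ a → Bool) * ∑ a, ∑ i, c a i ^ 2 := by
  have := sum_sq_sum_sign_mul fun p : (a : α) × κ a => c p.1 p.2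
  rw [Fintype.card_congr (Equiv.piCurry fun a (_ : κ a) => Bool)] at this
  simp only [← univ_sigma_univ, sum_sigma] at this
  rw [← this, ← (Equiv.piCurry fun a (_ : κ a) => Bool).sum_comp]
  rfl

theorem sum_sum_sq_sum_sum_sign_mul (x : (a : α) → κ a → n → ℝ) :
    ∑ s : (a : α) → κ a → Bool, ∑ j, (∑ a, ∑ i, (if s a i then (1 : ℝ) else -1) * x a i j) ^ 2
      = Fintype.card ((a : α) → κ a → Bool) * ∑ a, ∑ i, ∑ j, x a i j ^ 2 := by
  rw [sum_comm, sum_congr rfl fun j _ => sum_sq_sum_sum_sign_mul fun a i => x a i j, ← mul_sum]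
  simp only [sum_comm (γ := n)]

theorem sum_sum_sum_sq_sum_sign_mul (x : (a : α) → κ a → n → ℝ) :
    ∑ s : (a : α) → κ a → Bool, ∑ a, ∑ j, (∑ i, (if s a i then (1 : ℝ) else -1) * x a i j) ^ 2
      = Fintype.card ((a : α) → κ a → Bool) * ∑ a, ∑ i, ∑ j, x a i j ^ 2 := by
  -- the block sum at `a` is the full signed sum of the family supported on block `a`
  have block (s : (a : α) → κ a → Bool) (a : α) (j : n) :
      ∑ i, (if s a i then (1 : ℝ) else -1) * x a i j
        = ∑ b, ∑ i, (if s b i then (1 : ℝ) else -1) * (if b = a then x b i j else 0) := by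
    rw [Fintype.sum_eq_single a fun b hb => by simp [hb]]
    simp
  have block_sq (a : α) (j : n) :
      ∑ b, ∑ i, (if b = a then x b i j else 0) ^ 2 = ∑ i, x a i j ^ 2 := by
    rw [Fintype.sum_eq_single a fun b hb => by simp [hb]]
    simp
  calc ∑ s : (a : α) → κ a → Bool, ∑ a, ∑ j, (∑ i, (if s a i then (1 : ℝ) else -1) * x a i j) ^ 2
      = ∑ a, ∑ j, ∑ s : (a : α) → κ a → Bool,
          (∑ b, ∑ i, (if s b i then (1 : ℝ) else -1) * (if b = a then x b i j else 0)) ^ 2 := by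
        simp only [block]
        rw [sum_comm]
        exact sum_congr rfl fun a _ => sum_comm
    _ = ∑ a, ∑ j, Fintype.card ((a : α) → κ a → Bool) * ∑ i, x a i j ^ 2 := by
        simp only [sum_sq_sum_sum_sign_mul, block_sq]
    _ = Fintype.card ((a : α) → κ a → Bool) * ∑ a, ∑ i, ∑ j, x a i j ^ 2 := by
        simp only [← mul_sum]
        rw [sum_congr rfl fun a _ => sum_comm]

end SignPatterns

theorem sum_sqrt_le_card_mul_sqrt_of_sum_eq {Ω : Type*} [Fintype Ω] {F : Ω → ℝ}
    (hF : ∀ ω, 0 ≤ F ω) {X : ℝ} (hsum : ∑ ω, F ω = Fintype.card Ω * X) :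
    ∑ ω, √(F ω) ≤ Fintype.card Ω * √X := by
  calc ∑ ω, √(F ω) ≤ √(Fintype.card Ω) * √(∑ ω, F ω) := by
        simpa using Real.sum_sqrt_mul_sqrt_le univ (f := fun _ => 1) (fun _ => zero_le_one) hF
    _ = Fintype.card Ω * √X := by
        rw [hsum, Real.sqrt_mul (by positivity), ← mul_assoc, Real.mul_self_sqrt (by positivity)]

theorem Matrix.sum_sq_mulVec_of_transpose_mul_self {n : Type*} [Fintype n] [DecidableEq n]
    {V : Matrix n n ℝ} (hV : Vᵀ * V = 1) (w : n → ℝ) :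
    ∑ k, (V *ᵥ w) k ^ 2 = ∑ k, w k ^ 2 := by
  have (v : n → ℝ) : ∑ k, v k ^ 2 = v ⬝ᵥ v := by simp [dotProduct, sq]
  rw [this, this]
  nth_rw 1 [← vecMul_transpose]
  rw [← dotProduct_mulVec, mulVec_mulVec, hV, one_mulVec]

theorem Matrix.mulVec_dotProduct_eq_dotProduct_transpose_mulVec {m n R : Type*} [Fintype m]
    [Fintype n] [CommSemiring R] (U : Matrix m n R) (v : n → R) (y : m → R) :
    U *ᵥ v ⬝ᵥ y = v ⬝ᵥ Uᵀ *ᵥ y := by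
  rw [dotProduct_comm, dotProduct_mulVec, ← mulVec_transpose, dotProduct_comm]

theorem sum_sum_mul_le_l21_mul_sqrt {d T : ℕ} (A : Matrix (Fin d) (Fin T) ℝ)
    (Z : Fin T → Fin d → ℝ) :
    ∑ t, ∑ k, A k t * Z t k ≤ l21 A * √(∑ t, ∑ k, Z t k ^ 2) := by
  calc ∑ t, ∑ k, A k t * Z t k
      = ∑ k, ∑ t, A k t * Z t k := sum_comm
    _ ≤ ∑ k, √(∑ t, A k t ^ 2) * √(∑ t, Z t k ^ 2) :=
        sum_le_sum fun k _ => Real.sum_mul_le_sqrt_mul_sqrt _ _ _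
    _ ≤ ∑ k, √(∑ t, A k t ^ 2) * √(∑ t, ∑ k, Z t k ^ 2) := by
        gcongr with k
        exact single_le_sum (f := fun k => Z _ k ^ 2) (fun _ _ => sq_nonneg _) (mem_univ k)
    _ = l21 A * √(∑ t, ∑ k, Z t k ^ 2) := by rw [l21, sum_mul]

theorem sum_mulVec_add_dotProduct_le {d T : ℕ} (A : Matrix (Fin d) (Fin T) ℝ) (a0 : Fin d → ℝ)
    {U : Matrix (Fin d) (Fin d) ℝ} (hU : Uᵀ * U = 1) (y : Fin T → Fin d → ℝ) :
    ∑ t, U *ᵥ (fun j => A j t + a0 j) ⬝ᵥ y t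
      ≤ l21 A * √(∑ t, ∑ j, y t j ^ 2) + √(∑ j, a0 j ^ 2) * √(∑ j, (∑ t, y t j) ^ 2) := by
  have hUt : Uᵀᵀ * Uᵀ = 1 := by rw [transpose_transpose]; exact mul_eq_one_comm.mp hU
  calc ∑ t, U *ᵥ (fun j => A j t + a0 j) ⬝ᵥ y t
      = ∑ t, ∑ k, A k t * (Uᵀ *ᵥ y t) k + ∑ k, a0 k * (Uᵀ *ᵥ ∑ t, y t) k := by
        simp only [mulVec_dotProduct_eq_dotProduct_transpose_mulVec]
        simp only [dotProduct, add_mul, sum_add_distrib, mulVec_sum, Finset.sum_apply, mul_sum]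
        rw [sum_comm (s := univ) (t := univ) (f := fun t k => a0 k * (Uᵀ *ᵥ y t) k)]
    _ ≤ l21 A * √(∑ t, ∑ k, (Uᵀ *ᵥ y t) k ^ 2)
          + √(∑ k, a0 k ^ 2) * √(∑ k, (Uᵀ *ᵥ ∑ t, y t) k ^ 2) :=
        add_le_add (sum_sum_mul_le_l21_mul_sqrt _ _) (Real.sum_mul_le_sqrt_mul_sqrt _ _ _)
    _ = l21 A * √(∑ t, ∑ j, y t j ^ 2) + √(∑ j, a0 j ^ 2) * √(∑ j, (∑ t, y t j) ^ 2) := by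
        simp only [sum_sq_mulVec_of_transpose_mul_self hUt, Finset.sum_apply]

theorem sSup_signed_objective_le {d T : ℕ} (γ β : ℝ) (m : Fin T → ℕ)
    (x : (t : Fin T) → Fin (m t) → Fin d → ℝ) (s : (t : Fin T) → Fin (m t) → Bool) :
    sSup {v : ℝ |
          ∃ (A : Matrix (Fin d) (Fin T) ℝ) (a0 : Fin d → ℝ) (U : Matrix (Fin d) (Fin d) ℝ),
            l21 A ^ 2 ≤ (T : ℝ) / γ ∧ (∑ j, a0 j ^ 2) ≤ 1 / β ∧ Uᵀ * U = 1 ∧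
            v = ∑ t, ∑ i, (if s t i then (1 : ℝ) else -1) *
              (U.mulVec (fun j => A j t + a0 j) ⬝ᵥ x t i)}
      ≤ √((T : ℝ) / γ) * √(∑ t, ∑ j, (∑ i, (if s t i then (1 : ℝ) else -1) * x t i j) ^ 2)
        + √(1 / β) * √(∑ j, (∑ t, ∑ i, (if s t i then (1 : ℝ) else -1) * x t i j) ^ 2) := by
  refine Real.sSup_le ?_ (by positivity)
  rintro _ ⟨A, a0, U, hA, ha0, hU, rfl⟩
  have hl21 : l21 A ≤ √((T : ℝ) / γ) := Real.le_sqrt_of_sq_le hA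
  have signed (v : Fin T → Fin d → ℝ) :
      ∑ t, ∑ i, (if s t i then (1 : ℝ) else -1) * (v t ⬝ᵥ x t i)
        = ∑ t, v t ⬝ᵥ fun j => ∑ i, (if s t i then (1 : ℝ) else -1) * x t i j := by
    simp only [dotProduct, mul_sum]
    refine sum_congr rfl fun t _ => ?_
    rw [sum_comm]
    exact sum_congr rfl fun i _ => sum_congr rfl fun j _ => by ring
  rw [signed]
  refine (sum_mulVec_add_dotProduct_le A a0 hU _).trans (add_le_add ?_ ?_) <;> gcongr

theorem rademacher_sup_bound_general {d T : ℕ} (γ β : ℝ)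
    (m : Fin T → ℕ) (x : (t : Fin T) → Fin (m t) → Fin d → ℝ) :
    (∑ s : (t : Fin T) → Fin (m t) → Bool,
        sSup {v : ℝ |
          ∃ (A : Matrix (Fin d) (Fin T) ℝ) (a0 : Fin d → ℝ) (U : Matrix (Fin d) (Fin d) ℝ),
            l21 A ^ 2 ≤ (T : ℝ) / γ ∧ (∑ j, a0 j ^ 2) ≤ 1 / β ∧ Uᵀ * U = 1 ∧
            v = ∑ t, ∑ i, (if s t i then (1 : ℝ) else -1) *
              (U.mulVec (fun j => A j t + a0 j) ⬝ᵥ x t i)}) / 2 ^ (∑ t, m t) ≤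
      (Real.sqrt ((T : ℝ) / γ) + Real.sqrt (1 / β)) *
        Real.sqrt (∑ t, ∑ i, ∑ j, x t i j ^ 2) := by
  have hcard : (Fintype.card ((t : Fin T) → Fin (m t) → Bool) : ℝ) = 2 ^ ∑ t, m t := by
    simp [Fintype.card_pi, prod_pow_eq_pow_sum]
  have hblock := sum_sqrt_le_card_mul_sqrt_of_sum_eq (fun _ => by positivity)
    (sum_sum_sum_sq_sum_sign_mul x)
  have hfull := sum_sqrt_le_card_mul_sqrt_of_sum_eq (fun _ => by positivity)
    (sum_sum_sq_sum_sum_sign_mul x)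
  rw [hcard] at hblock hfull
  rw [div_le_iff₀ (by positivity)]
  refine (sum_le_sum fun s _ => sSup_signed_objective_le γ β m x s).trans ?_
  rw [sum_add_distrib, ← mul_sum, ← mul_sum]
  calc _ ≤ √((T : ℝ) / γ) * (2 ^ (∑ t, m t) * √(∑ t, ∑ i, ∑ j, x t i j ^ 2))
        + √(1 / β) * (2 ^ (∑ t, m t) * √(∑ t, ∑ i, ∑ j, x t i j ^ 2)) := by gcongr
    _ = _ := by ring

/-- under the constraints ‖A‖₂₁² ≤ T/γ, ‖a₀‖₂² ≤ 1/β, U orthogonal,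
E_σ sup ∑_{t,i} σ_{ti} ⟨U(aₜ + a₀), x_{ti}⟩ ≤ (√(T/γ) + √(1/β)) √(∑_{t,i} ‖x_{ti}‖₂²).
The expectation over the Rademacher signs is the average over all sign assignments. -/
theorem rademacher_sup_bound {d T : ℕ} (γ β : ℝ) (hγ : 0 < γ) (hβ : 0 < β)
    (m : Fin T → ℕ) (x : (t : Fin T) → Fin (m t) → Fin d → ℝ) :
    (∑ s : (t : Fin T) → Fin (m t) → Bool,
        sSup {v : ℝ |
          ∃ (A : Matrix (Fin d) (Fin T) ℝ) (a0 : Fin d → ℝ) (U : Matrix (Fin d) (Fin d) ℝ),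
            l21 A ^ 2 ≤ (T : ℝ) / γ ∧ (∑ j, a0 j ^ 2) ≤ 1 / β ∧ Uᵀ * U = 1 ∧
            v = ∑ t, ∑ i, (if s t i then (1 : ℝ) else -1) *
              (U.mulVec (fun j => A j t + a0 j) ⬝ᵥ x t i)}) / 2 ^ (∑ t, m t) ≤
      (Real.sqrt ((T : ℝ) / γ) + Real.sqrt (1 / β)) *
        Real.sqrt (∑ t, ∑ i, ∑ j, x t i j ^ 2) :=
  rademacher_sup_bound_general γ β m x
end

section
/- Optimal value correspondence: For any A ∈ ℝ^{d×T}, a_0 ∈ ℝ^d, and orthogonal U ∈ ℝ^{d×d}, setting W = UA, w_0 = U a_0, and D = U Diag(‖a^i‖₂/‖A‖_{2,1})_{i=1}^d Uᵀ (assuming A ≠ 0), the objective ∑_{t,i} l(y_{ti}, ⟨a_t + a_0, Uᵀ x_{ti}⟩) + (γ/T)‖A‖_{2,1}² + β‖a_0‖₂² equals ∑_{t,i} l(y_{ti}, ⟨w_t + w_0, x_{ti}⟩) + (γ/T)∑_{t=1}^T ⟨w_t, D⁺ w_t⟩ + β⟨w_0, w_0⟩, and D satisfies trace(D) = 1, D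 positive semidefinite, and range(W) ⊆ range(D). -/
/-!
Conjugating by the orthogonal matrix `U` moves everything to the eigenbasis of `D`, where `D` is the
diagonal matrix `σ i = ‖aⁱ‖₂ / ‖A‖₂₁` and its pseudoinverse is the diagonal matrix `σ⁻¹`
(with `0⁻¹ = 0`). The regulariser `∑ₜ ⟨wₜ, D⁺ wₜ⟩` then becomes `∑ᵢ ‖aⁱ‖₂² / σ i = ‖A‖₂₁ ∑ᵢ ‖aⁱ‖₂`,
and the loss terms and `‖w₀‖²` are unchanged because `U` preserves inner products. A zero
eigenvalue of `D` only occurs on a zero row of `A`, which gives `range W ⊆ range D`.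
-/

open Matrix

theorem IsMoorePenrose.unique_s15 {d : ℕ} {D B C : Matrix (Fin d) (Fin d) ℝ}
    (hB : IsMoorePenrose D B) (hC : IsMoorePenrose D C) : B = C := by
  obtain ⟨hB1, hB2, hB3, hB4⟩ := hB
  obtain ⟨hC1, hC2, hC3, hC4⟩ := hC
  have hBD : B * D = C * D :=
    calc B * D = (B * D)ᵀ := hB4.symm
      _ = (D * C * D)ᵀ * Bᵀ := by rw [transpose_mul, hC1]
      _ = (C * D)ᵀ * (B * D)ᵀ := by simp only [transpose_mul, Matrix.mul_assoc]
      _ = C * (D * B * D) := by rw [hC4, hB4]; simp only [Matrix.mul_assoc]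
      _ = C * D := by rw [hB1]
  have hDB : D * B = D * C :=
    calc D * B = (D * B)ᵀ := hB3.symm
      _ = Bᵀ * (D * C * D)ᵀ := by rw [transpose_mul, hC1]
      _ = (D * B)ᵀ * (D * C)ᵀ := by simp only [transpose_mul, Matrix.mul_assoc]
      _ = (D * B * D) * C := by rw [hB3, hC3]; simp only [Matrix.mul_assoc]
      _ = D * C := by rw [hB1]
  calc B = B * D * B := hB2.symm
    _ = C * D * C := by rw [Matrix.mul_assoc, hDB, ← Matrix.mul_assoc, hBD]
    _ = C := hC2

namespace Matrix

section Conjugation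

variable {n R : Type*} [Fintype n] [CommRing R]

theorem transpose_mul_apply_eq_mulVec {m : Type*} (U : Matrix n n R) (A : Matrix n m R) (t : m) :
    (U * A)ᵀ t = U *ᵥ Aᵀ t := by
  ext i
  simp [mul_apply, mulVec, dotProduct]

variable [DecidableEq n]

theorem transpose_conj_diagonal (U : Matrix n n R) (v : n → R) :
    (U * diagonal v * Uᵀ)ᵀ = U * diagonal v * Uᵀ := by
  simp [transpose_mul, Matrix.mul_assoc]

variable {U : Matrix n n R} (hU : Uᵀ * U = 1)
include hU

theorem mulVec_dotProduct_mulVec_of_transpose_mul_self (v w : n → R) :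
    U *ᵥ v ⬝ᵥ U *ᵥ w = v ⬝ᵥ w := by
  rw [dotProduct_mulVec, ← mulVec_transpose, mulVec_mulVec, hU, one_mulVec]

theorem conj_diagonal_mul_self (v : n → R) : U * diagonal v * Uᵀ * U = U * diagonal v := by
  rw [Matrix.mul_assoc, hU, Matrix.mul_one]

theorem conj_diagonal_mul_conj_diagonal (v w : n → R) :
    U * diagonal v * Uᵀ * (U * diagonal w * Uᵀ) = U * diagonal (v * w) * Uᵀ := by
  rw [← Matrix.mul_assoc, ← Matrix.mul_assoc, conj_diagonal_mul_self hU, Matrix.mul_assoc U,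
    diagonal_mul_diagonal]
  rfl

theorem conj_diagonal_mulVec_mulVec (v a : n → R) :
    (U * diagonal v * Uᵀ) *ᵥ (U *ᵥ a) = U *ᵥ (v * a) := by
  rw [mulVec_mulVec, conj_diagonal_mul_self hU, ← mulVec_mulVec]
  congr 1
  ext i
  exact mulVec_diagonal v a i

theorem trace_conj_diagonal (v : n → R) : trace (U * diagonal v * Uᵀ) = ∑ i, v i := by
  rw [trace_mul_comm, ← Matrix.mul_assoc, hU, Matrix.one_mul, trace_diagonal]

end Conjugation

theorem isMoorePenrose_conj_diagonal_inv {d : ℕ} {U : Matrix (Fin d) (Fin d) ℝ} (hU : Uᵀ * U = 1)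
    (σ : Fin d → ℝ) : IsMoorePenrose (U * diagonal σ * Uᵀ) (U * diagonal σ⁻¹ * Uᵀ) := by
  refine ⟨?_, ?_, ?_, ?_⟩ <;> simp only [conj_diagonal_mul_conj_diagonal hU, transpose_conj_diagonal]
  · rw [show σ * σ⁻¹ * σ = σ from funext fun i => mul_inv_mul_cancel (σ i)]
  · rw [show σ⁻¹ * σ * σ⁻¹ = σ⁻¹ from funext fun i => by simpa using mul_inv_mul_cancel (σ i)⁻¹]

theorem diagonal_mul_inv_mul_of_eq_zero {m n K : Type*} [Fintype m] [DecidableEq m]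
    [DivisionRing K] {σ : m → K} {A : Matrix m n K} (hσ : ∀ i, σ i = 0 → ∀ t, A i t = 0) :
    diagonal (σ * σ⁻¹) * A = A := by
  ext i t
  rw [diagonal_mul, Pi.mul_apply, Pi.inv_apply]
  by_cases hi : σ i = 0
  · simp [hi, hσ i hi t]
  · rw [mul_inv_cancel₀ hi, one_mul]

theorem range_mulVec_subset_of_mul_mul_eq {m n R : Type*} [Fintype m] [Fintype n] [Semiring R]
    {D E : Matrix m m R} {W : Matrix m n R} (h : D * E * W = W) :
    Set.range W.mulVec ⊆ Set.range D.mulVec := by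
  rintro _ ⟨u, rfl⟩
  exact ⟨E *ᵥ W *ᵥ u, by rw [mulVec_mulVec, mulVec_mulVec, h]⟩

end Matrix

noncomputable def rowNorm {m n : Type*} [Fintype n] (A : Matrix m n ℝ) (i : m) : ℝ :=
  Real.sqrt (∑ t, A i t ^ 2)

section RowNorm

variable {m n : Type*} [Fintype n] (A : Matrix m n ℝ)

theorem rowNorm_nonneg (i : m) : 0 ≤ rowNorm A i := Real.sqrt_nonneg _

theorem rowNorm_sq (i : m) : rowNorm A i ^ 2 = ∑ t, A i t ^ 2 :=
  Real.sq_sqrt (Finset.sum_nonneg fun _ _ => sq_nonneg _)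

theorem rowNorm_eq_zero {A : Matrix m n ℝ} {i : m} (hi : rowNorm A i = 0) (t : n) :
    A i t = 0 := by
  have hsum : ∑ t, A i t ^ 2 = 0 := by rw [← rowNorm_sq, hi, sq, zero_mul]
  exact pow_eq_zero_iff two_ne_zero |>.mp <|
    congrFun ((Fintype.sum_eq_zero_iff_of_nonneg fun t => sq_nonneg (A i t)).mp hsum) t

/-- Each row contributes `(r / s)⁻¹ r² = s r`, also when `r = 0` since `0⁻¹ = 0`. -/
theorem sum_dotProduct_inv_rowNorm_div_mul [Fintype m] (s : ℝ) :
    ∑ t, Aᵀ t ⬝ᵥ ((fun i => (rowNorm A i / s)⁻¹) * Aᵀ t) = s * ∑ i, rowNorm A i := by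
  simp only [dotProduct, transpose_apply, Pi.mul_apply]
  rw [Finset.sum_comm, Finset.mul_sum]
  refine Finset.sum_congr rfl fun i _ => ?_
  simp_rw [mul_left_comm (A i _), ← sq]
  rw [← Finset.mul_sum, ← rowNorm_sq, inv_div, div_mul_eq_mul_div, sq, mul_div_assoc,
    mul_self_div_self]

end RowNorm

theorem l21_nonneg {d T : ℕ} (A : Matrix (Fin d) (Fin T) ℝ) : 0 ≤ l21 A :=
  Finset.sum_nonneg fun i _ => rowNorm_nonneg A i

theorem l21_ne_zero {d T : ℕ} {A : Matrix (Fin d) (Fin T) ℝ} (hA : A ≠ 0) : l21 A ≠ 0 := by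
  intro h
  have hrows := (Fintype.sum_eq_zero_iff_of_nonneg (rowNorm_nonneg A)).mp h
  exact hA (Matrix.ext fun i t => rowNorm_eq_zero (congrFun hrows i) t)

theorem optimal_value_correspondence_general {d T : ℕ} (γ β : ℝ)
    (l : ℝ → ℝ → ℝ) (m : Fin T → ℕ)
    (x : (t : Fin T) → Fin (m t) → Fin d → ℝ) (y : (t : Fin T) → Fin (m t) → ℝ)
    (A : Matrix (Fin d) (Fin T) ℝ) (hA : A ≠ 0) (a0 : Fin d → ℝ)
    (U : Matrix (Fin d) (Fin d) ℝ) (hU : Uᵀ * U = 1)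
    (W : Matrix (Fin d) (Fin T) ℝ) (hW : W = U * A)
    (w0 : Fin d → ℝ) (hw0 : w0 = U.mulVec a0)
    (D : Matrix (Fin d) (Fin d) ℝ)
    (hD : D = U * Matrix.diagonal (fun i => Real.sqrt (∑ t, A i t ^ 2) / l21 A) * Uᵀ)
    (Dp : Matrix (Fin d) (Fin d) ℝ) (hDp : IsMoorePenrose D Dp) :
    ((∑ t, ∑ i, l (y t i) ((fun j => A j t + a0 j) ⬝ᵥ Uᵀ.mulVec (x t i))) +
        (γ / (T : ℝ)) * l21 A ^ 2 + β * (∑ j, a0 j ^ 2) =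
      (∑ t, ∑ i, l (y t i) ((fun j => W j t + w0 j) ⬝ᵥ x t i)) +
        (γ / (T : ℝ)) * (∑ t, (Wᵀ t) ⬝ᵥ Dp.mulVec (Wᵀ t)) + β * (w0 ⬝ᵥ w0)) ∧
      D.trace = 1 ∧ D.PosSemidef ∧
      ∀ v ∈ Set.range W.mulVec, v ∈ Set.range D.mulVec := by
  set σ : Fin d → ℝ := fun i => rowNorm A i / l21 A
  replace hD : D = U * diagonal σ * Uᵀ := hD
  have hDp_eq : Dp = U * diagonal σ⁻¹ * Uᵀ :=
    hDp.unique_s15 (hD ▸ isMoorePenrose_conj_diagonal_inv hU σ)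
  have hW_col (t : Fin T) : Wᵀ t = U *ᵥ Aᵀ t := hW ▸ transpose_mul_apply_eq_mulVec U A t
  refine ⟨?_, ?_, ?_, range_mulVec_subset_of_mul_mul_eq (E := Dp) ?_⟩
  · have hloss (t : Fin T) (i : Fin (m t)) :
        (fun j => A j t + a0 j) ⬝ᵥ Uᵀ *ᵥ x t i = (fun j => W j t + w0 j) ⬝ᵥ x t i := by
      rw [dotProduct_transpose_mulVec, dotProduct_comm]
      change U *ᵥ (Aᵀ t + a0) ⬝ᵥ x t i = (Wᵀ t + w0) ⬝ᵥ x t i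
      rw [mulVec_add, hW_col, hw0]
    have hreg : ∑ t, Wᵀ t ⬝ᵥ Dp *ᵥ Wᵀ t = l21 A ^ 2 := by
      simp_rw [hW_col, hDp_eq, conj_diagonal_mulVec_mulVec hU,
        mulVec_dotProduct_mulVec_of_transpose_mul_self hU]
      rw [sq]
      exact sum_dotProduct_inv_rowNorm_div_mul A (l21 A)
    have hbias : w0 ⬝ᵥ w0 = ∑ j, a0 j ^ 2 := by
      rw [hw0, mulVec_dotProduct_mulVec_of_transpose_mul_self hU]
      simp only [dotProduct, sq]
    simp only [hloss, hreg, hbias]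
  · rw [hD, trace_conj_diagonal hU, ← Finset.sum_div]
    exact div_self (l21_ne_zero hA)
  · rw [hD]
    simpa using (posSemidef_diagonal_iff.mpr fun i =>
      div_nonneg (rowNorm_nonneg A i) (l21_nonneg A)).mul_mul_conjTranspose_same U
  · rw [hD, hDp_eq, conj_diagonal_mul_conj_diagonal hU, hW, ← Matrix.mul_assoc,
      conj_diagonal_mul_self hU, Matrix.mul_assoc, diagonal_mul_inv_mul_of_eq_zero]
    intro i hi
    exact rowNorm_eq_zero ((div_eq_zero_iff.mp hi).resolve_right (l21_ne_zero hA))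

/-- optimal value correspondence. With W = UA, w₀ = Ua₀ and
D = U·Diag(‖aⁱ‖₂/‖A‖₂₁)·Uᵀ, the objective in (A, a₀, U) equals the objective in
(W, w₀, D), and D is PSD with trace 1 and range(W) ⊆ range(D). -/
theorem optimal_value_correspondence {d T : ℕ} (γ β : ℝ) (hγ : 0 < γ) (hβ : 0 < β)
    (l : ℝ → ℝ → ℝ) (m : Fin T → ℕ)
    (x : (t : Fin T) → Fin (m t) → Fin d → ℝ) (y : (t : Fin T) → Fin (m t) → ℝ)
    (A : Matrix (Fin d) (Fin T) ℝ) (hA : A ≠ 0) (a0 : Fin d → ℝ)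
    (U : Matrix (Fin d) (Fin d) ℝ) (hU : Uᵀ * U = 1)
    (W : Matrix (Fin d) (Fin T) ℝ) (hW : W = U * A)
    (w0 : Fin d → ℝ) (hw0 : w0 = U.mulVec a0)
    (D : Matrix (Fin d) (Fin d) ℝ)
    (hD : D = U * Matrix.diagonal (fun i => Real.sqrt (∑ t, A i t ^ 2) / l21 A) * Uᵀ)
    (Dp : Matrix (Fin d) (Fin d) ℝ) (hDp : IsMoorePenrose D Dp) :
    ((∑ t, ∑ i, l (y t i) ((fun j => A j t + a0 j) ⬝ᵥ Uᵀ.mulVec (x t i))) +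
        (γ / (T : ℝ)) * l21 A ^ 2 + β * (∑ j, a0 j ^ 2) =
      (∑ t, ∑ i, l (y t i) ((fun j => W j t + w0 j) ⬝ᵥ x t i)) +
        (γ / (T : ℝ)) * (∑ t, (Wᵀ t) ⬝ᵥ Dp.mulVec (Wᵀ t)) + β * (w0 ⬝ᵥ w0)) ∧
      D.trace = 1 ∧ D.PosSemidef ∧
      ∀ v ∈ Set.range W.mulVec, v ∈ Set.range D.mulVec :=
  optimal_value_correspondence_general γ β l m x y A hA a0 U hU W hW w0 hw0 D hD Dp hDp
end
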